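/- arXiv:1311.5471 — 3 statements merged into one kernel-verified Lean document; each statement's English description precedes it below -/
import Mathlib

section
/- Let F be a bipartite graph with m edges and no isolated vertices. Then the 2-color Ramsey number of F satisfies r_2(F) ≤ 2^6 · m^{3/2} · 2^{2√(2m) + 1/2}; in particular r_2(F) ≤ 2^{(1+o(1)) 2√(2m)} as m → ∞. -/
open SimpleGraph

/-- Given a `k`-coloring `C` of the edges of the complete graph on `Fin N`,
`monoCopyIn F C` says that some color class contains a copy of the graph `F`,
i.e. there is a color `c` and an injective graph homomorphism from `F` into the
graph of `c`-colored edges. -/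
def monoCopyIn {V : Type*} (F : SimpleGraph V) {N k : ℕ}
    (C : Sym2 (Fin N) → Fin k) : Prop :=
  ∃ c : Fin k, ∃ f : F →g SimpleGraph.fromRel (fun u v => C s(u, v) = c),
    Function.Injective f

/-- The multicolor Ramsey number `r_k(F)`: the least `N` such that every
`k`-coloring of the edges of `K_N` contains a monochromatic copy of `F`. -/
noncomputable def multiRamsey {V : Type*} (F : SimpleGraph V) (k : ℕ) : ℕ :=
  sInf {N | ∀ C : Sym2 (Fin N) → Fin k, monoCopyIn F C}

/-!
Colour the edges of `K_N` with `N = ramseyBound m` and keep a colour class `G` containing at least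
half of the edges. Put `s = ⌊√m⌋` and `t = 2s + 1`. Dependent random choice in `G`: averaging over
all `t`-tuples `T` of vertices, the common neighbourhood `A` of some injective `T` exceeds by `2m`
the number of `s`-sets inside `A` with fewer than `2m` common neighbours; deleting one vertex from
each of those leaves a set `U` of at least `2m` vertices, completely joined to `T`, in which any `s`
vertices have at least `2m` common neighbours.

Let `X ∪ Y` be a bipartition of `F`. Since `F` has `m` edges, at most `2s + 1` vertices have
degree above `s`, and `F` has at most `2m` vertices. Embed `X` into `U`, the vertices of `Y` of
high degree into `T`, and then the remaining vertices of `Y` one at a time into the common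
neighbourhood of the images of their at most `s` neighbours. Finally `N = O(m · 4^√m)`.
-/

open Finset Filter

theorem Nat.pow_le_descFactorial_add (n : ℕ) :
    ∀ t, n ^ t ≤ n.descFactorial t + t ^ 2 * n ^ (t - 1)
  | 0 => by simp
  | t + 1 => by
    have ih := Nat.pow_le_descFactorial_add n t
    have h₁ : n * n.descFactorial t ≤ n.descFactorial (t + 1) + t * n ^ t := by
      rw [Nat.descFactorial_succ]
      calc n * n.descFactorial t ≤ (n - t + t) * n.descFactorial t := by gcongr; omega
        _ ≤ (n - t) * n.descFactorial t + t * n ^ t := by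
          rw [add_mul]; gcongr; exact n.descFactorial_le_pow t
    have h₂ : n * (t ^ 2 * n ^ (t - 1)) ≤ t ^ 2 * n ^ t := by
      rcases t with _ | t
      · simp
      · rw [Nat.add_sub_cancel]; exact le_of_eq (by ring)
    calc n ^ (t + 1) = n * n ^ t := by ring
      _ ≤ n * (n.descFactorial t + t ^ 2 * n ^ (t - 1)) := by gcongr
      _ ≤ n.descFactorial (t + 1) + (t + 1) ^ 2 * n ^ (t + 1 - 1) := by
        rw [Nat.add_sub_cancel, mul_add]; nlinarith [Nat.zero_le (n ^ t)]

theorem Nat.pow_succ_le_mul_sub_one_pow_add (N t : ℕ) :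
    N ^ (t + 1) ≤ N * (N - 1) ^ t + t * N ^ t := by
  rcases N with _ | n
  · simp
  rw [Nat.add_sub_cancel]
  induction t with
  | zero => simp
  | succ t ih =>
    have : n ^ t ≤ (n + 1) ^ t := Nat.pow_le_pow_left (Nat.le_succ n) t
    calc (n + 1) ^ (t + 1 + 1) = (n + 1) * (n + 1) ^ (t + 1) := by ring
      _ ≤ (n + 1) * ((n + 1) * n ^ t + t * (n + 1) ^ t) := by gcongr
      _ ≤ (n + 1) * n ^ (t + 1) + (t + 1) * (n + 1) ^ (t + 1) := by
        rw [pow_succ, pow_succ (n + 1)]; nlinarith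

theorem Nat.le_of_mul_mul_sub_one_pow_le {N t c S : ℕ} (hN : 0 < N)
    (hlow : N * (N * (N - 1)) ^ t ≤ 2 ^ t * N ^ t * S) (hup : S ≤ c * N ^ t) :
    N ≤ 2 ^ t * c + t := by
  have hN0 : 0 < N ^ t * N ^ t := Nat.mul_pos (pow_pos hN t) (pow_pos hN t)
  refine Nat.le_of_mul_le_mul_right ?_ hN0
  calc N * (N ^ t * N ^ t) = N ^ t * N ^ (t + 1) := by ring
    _ ≤ N ^ t * (N * (N - 1) ^ t + t * N ^ t) :=
        Nat.mul_le_mul_left _ (N.pow_succ_le_mul_sub_one_pow_add t)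
    _ = N * (N * (N - 1)) ^ t + t * (N ^ t * N ^ t) := by ring
    _ ≤ 2 ^ t * N ^ t * (c * N ^ t) + t * (N ^ t * N ^ t) :=
        Nat.add_le_add_right (hlow.trans (Nat.mul_le_mul_left _ hup)) _
    _ = (2 ^ t * c + t) * (N ^ t * N ^ t) := by ring

theorem Finset.card_mul_pow_sum_le {ι α : Type*} [Semiring α] [LinearOrder α]
    [IsStrictOrderedRing α] [ExistsAddOfLE α] (s : Finset ι) {f : ι → α}
    (hf : ∀ i ∈ s, 0 ≤ f i) :
    ∀ t, (#s : α) * (∑ i ∈ s, f i) ^ t ≤ (#s : α) ^ t * ∑ i ∈ s, f i ^ t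
  | 0 => by simp
  | t + 1 => by
    rw [pow_succ' (#s : α) t, mul_assoc]
    exact mul_le_mul_of_nonneg_left (pow_sum_le_card_mul_sum_pow hf t) (Nat.cast_nonneg _)

theorem Finset.exists_hittingSet {α : Type*} [DecidableEq α] (𝒮 : Finset (Finset α))
    (h : ∀ S ∈ 𝒮, S.Nonempty) : ∃ R : Finset α, #R ≤ #𝒮 ∧ ∀ S ∈ 𝒮, ∃ x ∈ S, x ∈ R := by
  induction 𝒮 using Finset.induction_on with
  | empty => exact ⟨∅, by simp, by simp⟩
  | insert S 𝒮 hS ih =>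
    obtain ⟨R, hR, hRS⟩ := ih fun T hT => h T (mem_insert_of_mem hT)
    obtain ⟨x, hx⟩ := h S (mem_insert_self S 𝒮)
    refine ⟨insert x R, ?_, ?_⟩
    · rw [card_insert_of_notMem hS]
      exact (card_insert_le x R).trans (Nat.succ_le_succ hR)
    · intro T hT
      rcases mem_insert.1 hT with rfl | hT
      · exact ⟨x, hx, mem_insert_self x R⟩
      · obtain ⟨y, hy, hyR⟩ := hRS T hT
        exact ⟨y, hy, mem_insert_of_mem hyR⟩

section Tuples

variable {α : Type*} [Fintype α] [DecidableEq α]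

theorem card_filter_image_subset (t : ℕ) (X : Finset α) :
    #{T : Fin t → α | univ.image T ⊆ X} = #X ^ t := by
  rw [← Fintype.card_piFinset_const]
  congr 1
  ext T
  simp [image_subset_iff, Fintype.mem_piFinset]

theorem card_filter_not_injective_le (t : ℕ) :
    #{T : Fin t → α | ¬ Function.Injective T} ≤ t ^ 2 * Fintype.card α ^ (t - 1) := by
  have hinj : #{T : Fin t → α | Function.Injective T} = (Fintype.card α).descFactorial t := by
    rw [← Fintype.card_subtype, Fintype.card_congr (Equiv.subtypeInjectiveEquivEmbedding _ _),
      Fintype.card_embedding_eq, Fintype.card_fin]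
  have htot := card_filter_add_card_filter_not (s := (univ : Finset (Fin t → α)))
    fun T => Function.Injective T
  rw [card_univ, Fintype.card_pi_const, hinj] at htot
  have := (Fintype.card α).pow_le_descFactorial_add t
  omega

end Tuples

namespace SimpleGraph

section CommonNbhd

variable {V : Type*} [Fintype V] (G : SimpleGraph V) [DecidableRel G.Adj]

def commonNbhd (S : Finset V) : Finset V := {w | ∀ s ∈ S, G.Adj s w}

def sparseSets (d K : ℕ) : Finset (Finset V) :=
  {S ∈ univ.powersetCard d | #(G.commonNbhd S) < K}

variable {G}

@[simp] theorem mem_commonNbhd {S : Finset V} {w : V} :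
    w ∈ G.commonNbhd S ↔ ∀ s ∈ S, G.Adj s w := by
  simp [commonNbhd]

theorem commonNbhd_anti {S S' : Finset V} (h : S ⊆ S') : G.commonNbhd S' ⊆ G.commonNbhd S :=
  fun _ hw => mem_commonNbhd.2 fun s hs => mem_commonNbhd.1 hw s (h hs)

theorem subset_commonNbhd_comm {S S' : Finset V} :
    S ⊆ G.commonNbhd S' ↔ S' ⊆ G.commonNbhd S :=
  ⟨fun h _ hs' => mem_commonNbhd.2 fun _ hs => (mem_commonNbhd.1 (h hs) _ hs').symm,
    fun h _ hs => mem_commonNbhd.2 fun _ hs' => (mem_commonNbhd.1 (h hs') _ hs).symm⟩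

theorem commonNbhd_singleton (v : V) : G.commonNbhd {v} = G.neighborFinset v := by
  ext; simp

variable [DecidableEq V]

theorem card_filter_subset_commonNbhd_image (t : ℕ) (S : Finset V) :
    #{T : Fin t → V | S ⊆ G.commonNbhd (univ.image T)} = #(G.commonNbhd S) ^ t := by
  simp_rw [subset_commonNbhd_comm (S := S)]
  exact card_filter_image_subset t _

theorem sum_card_filter_subset_commonNbhd_image (t : ℕ) (𝒮 : Finset (Finset V)) :
    ∑ T : Fin t → V, #{S ∈ 𝒮 | S ⊆ G.commonNbhd (univ.image T)} =
      ∑ S ∈ 𝒮, #(G.commonNbhd S) ^ t := by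
  simp_rw [← card_filter_subset_commonNbhd_image]
  exact sum_card_bipartiteAbove_eq_sum_card_bipartiteBelow _

theorem sum_card_commonNbhd_image (t : ℕ) :
    ∑ T : Fin t → V, #(G.commonNbhd (univ.image T)) = ∑ v, G.degree v ^ t := by
  calc ∑ T : Fin t → V, #(G.commonNbhd (univ.image T))
      = ∑ T : Fin t → V, #{v | {v} ⊆ G.commonNbhd (univ.image T)} := by
        simp only [singleton_subset_iff, filter_mem_eq_inter, univ_inter]
    _ = ∑ v, #{T : Fin t → V | {v} ⊆ G.commonNbhd (univ.image T)} :=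
      sum_card_bipartiteAbove_eq_sum_card_bipartiteBelow _
    _ = ∑ v, G.degree v ^ t := by
      simp_rw [card_filter_subset_commonNbhd_image, commonNbhd_singleton,
        card_neighborFinset_eq_degree]

theorem sum_card_sparseSets_subset_le (d K t : ℕ) :
    ∑ T : Fin t → V, #{S ∈ G.sparseSets d K | S ⊆ G.commonNbhd (univ.image T)} ≤
      (Fintype.card V).choose d * K ^ t := by
  rw [sum_card_filter_subset_commonNbhd_image]
  calc ∑ S ∈ G.sparseSets d K, #(G.commonNbhd S) ^ t
      ≤ ∑ _S ∈ G.sparseSets d K, K ^ t :=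
        sum_le_sum fun S hS => Nat.pow_le_pow_left (mem_filter.1 hS).2.le t
    _ ≤ (Fintype.card V).choose d * K ^ t := by
      rw [sum_const, smul_eq_mul]
      gcongr
      calc #(G.sparseSets d K) ≤ #(univ.powersetCard d : Finset (Finset V)) :=
            card_filter_le _ _
        _ = (Fintype.card V).choose d := by rw [card_powersetCard, card_univ]

theorem card_mul_pow_le_sum_card_commonNbhd_image (t : ℕ)
    (hdeg : Fintype.card V * (Fintype.card V - 1) ≤ 2 * ∑ v, G.degree v) :
    Fintype.card V * (Fintype.card V * (Fintype.card V - 1)) ^ t ≤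
      2 ^ t * Fintype.card V ^ t * ∑ T : Fin t → V, #(G.commonNbhd (univ.image T)) := by
  set N := Fintype.card V
  have hmean := (univ : Finset V).card_mul_pow_sum_le (f := fun v => G.degree v)
    (fun _ _ => Nat.zero_le _) t
  rw [card_univ] at hmean
  calc N * (N * (N - 1)) ^ t ≤ N * (2 * ∑ v, G.degree v) ^ t := by gcongr
    _ = 2 ^ t * (N * (∑ v, G.degree v) ^ t) := by ring
    _ ≤ 2 ^ t * (N ^ t * ∑ v, G.degree v ^ t) :=
      Nat.mul_le_mul_left _ (by exact_mod_cast hmean)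
    _ = 2 ^ t * N ^ t * ∑ T : Fin t → V, #(G.commonNbhd (univ.image T)) := by
      rw [sum_card_commonNbhd_image, mul_assoc]

theorem exists_injective_card_sparseSets_add_le (d K t u : ℕ)
    (hdeg : Fintype.card V * (Fintype.card V - 1) ≤ 2 * ∑ v, G.degree v)
    (hsparse : (Fintype.card V).choose d * K ^ t ≤ Fintype.card V ^ t)
    (hN : 2 ^ t * (u + t ^ 2 + 1) + t < Fintype.card V) :
    ∃ T : Fin t → V, Function.Injective T ∧
      #{S ∈ G.sparseSets d K | S ⊆ G.commonNbhd (univ.image T)} + u ≤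
        #(G.commonNbhd (univ.image T)) := by
  set N := Fintype.card V
  set A := fun T : Fin t → V => G.commonNbhd (univ.image T)
  set B := fun T : Fin t → V => #{S ∈ G.sparseSets d K | S ⊆ A T}
  by_contra! h
  -- a non-injective tuple is charged the trivial bound `N`
  have hpoint : ∀ T, #(A T) ≤ B T + u + if ¬ Function.Injective T then N else 0 := by
    intro T
    by_cases hT : Function.Injective T
    · simpa [hT] using (h T hT).le
    · simpa [hT] using le_add_left (card_le_univ (A T))
  have hnoninj : #{T : Fin t → V | ¬ Function.Injective T} * N ≤ t ^ 2 * N ^ t := by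
    calc #{T : Fin t → V | ¬ Function.Injective T} * N ≤ t ^ 2 * N ^ (t - 1) * N := by
          gcongr; exact card_filter_not_injective_le t
      _ ≤ t ^ 2 * N ^ t := by
          rcases t with _ | t
          · simp
          · rw [Nat.add_sub_cancel, mul_assoc, ← pow_succ]
  have hupper : ∑ T, #(A T) ≤ (u + t ^ 2 + 1) * N ^ t := by
    calc ∑ T, #(A T) ≤ ∑ T, (B T + u + if ¬ Function.Injective T then N else 0) :=
          sum_le_sum fun T _ => hpoint T
      _ = ∑ T, B T + u * N ^ t + #{T : Fin t → V | ¬ Function.Injective T} * N := by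
          rw [sum_add_distrib, sum_add_distrib, ← sum_filter, sum_const, sum_const, card_univ,
            Fintype.card_pi_const, smul_eq_mul, smul_eq_mul, mul_comm u]
      _ ≤ N ^ t + u * N ^ t + t ^ 2 * N ^ t := by
          gcongr
          exact (sum_card_sparseSets_subset_le d K t).trans hsparse
      _ = (u + t ^ 2 + 1) * N ^ t := by ring
  exact absurd (Nat.le_of_mul_mul_sub_one_pow_le (by omega)
    (card_mul_pow_le_sum_card_commonNbhd_image t hdeg) hupper) (not_le.2 hN)

theorem dependent_random_choice (d K t u : ℕ) (hd : 1 ≤ d) (hdu : d ≤ u)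
    (hdeg : Fintype.card V * (Fintype.card V - 1) ≤ 2 * ∑ v, G.degree v)
    (hsparse : (Fintype.card V).choose d * K ^ t ≤ Fintype.card V ^ t)
    (hN : 2 ^ t * (u + t ^ 2 + 1) + t < Fintype.card V) :
    ∃ U T : Finset V, #T = t ∧ (∀ x ∈ U, ∀ y ∈ T, G.Adj x y) ∧ u ≤ #U ∧
      ∀ S ⊆ U, #S ≤ d → K ≤ #(G.commonNbhd S) := by
  obtain ⟨T, hTinj, hT⟩ := exists_injective_card_sparseSets_add_le d K t u hdeg hsparse hN
  set A := G.commonNbhd (univ.image T)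
  set 𝒮 := {S ∈ G.sparseSets d K | S ⊆ A}
  have hmem : ∀ {S}, S ∈ 𝒮 ↔ #S = d ∧ #(G.commonNbhd S) < K ∧ S ⊆ A := by
    simp [𝒮, sparseSets, and_assoc]
  obtain ⟨R, hR, hRS⟩ := 𝒮.exists_hittingSet fun S hS => by
    rw [← card_pos, (hmem.1 hS).1]; omega
  have hU : u ≤ #(A \ R) := by
    have := card_le_card_sdiff_add_card (s := A) (t := R)
    omega
  refine ⟨A \ R, univ.image T, by simp [card_image_of_injective _ hTinj], ?_, hU, ?_⟩
  · intro x hx y hy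
    exact (mem_commonNbhd.1 (mem_sdiff.1 hx).1 y hy).symm
  · intro S hSU hSd
    obtain ⟨S', hSS', hS'U, hS'd⟩ := exists_subsuperset_card_eq hSU hSd (hdu.trans hU)
    by_contra! hS
    obtain ⟨x, hxS', hxR⟩ := hRS S' (hmem.2 ⟨hS'd,
      (card_le_card (commonNbhd_anti hSS')).trans_lt hS, hS'U.trans sdiff_subset⟩)
    exact (mem_sdiff.1 (hS'U hxS')).2 hxR

end CommonNbhd

variable {V W : Type*} {F : SimpleGraph V} {G : SimpleGraph W}

structure IsCopyOn (F : SimpleGraph V) (G : SimpleGraph W) (f : V → W) (P : Set V) : Prop where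
  injOn : Set.InjOn f P
  map_adj : ∀ ⦃a⦄, a ∈ P → ∀ ⦃b⦄, b ∈ P → F.Adj a b → G.Adj (f a) (f b)

namespace IsCopyOn

variable {f g : V → W} {P : Set V}

theorem isContained (hf : IsCopyOn F G f Set.univ) : F ⊑ G :=
  ⟨⟨⟨f, fun h => hf.map_adj trivial trivial h⟩, Set.injOn_univ.1 hf.injOn⟩⟩

theorem congr (hf : IsCopyOn F G f P) (h : Set.EqOn f g P) : IsCopyOn F G g P where
  injOn := hf.injOn.congr h
  map_adj _ ha _ hb hab := h ha ▸ h hb ▸ hf.map_adj ha hb hab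

theorem update_insert [DecidableEq V] {y : V} {w : W} (hf : IsCopyOn F G f P) (hy : y ∉ P)
    (hnbr : ∀ b, F.Adj y b → b ∈ P) (hw : w ∉ f '' P) (hadj : ∀ b, F.Adj y b → G.Adj w (f b)) :
    IsCopyOn F G (Function.update f y w) (insert y P) := by
  have heq : Set.EqOn (Function.update f y w) f P := fun x hx =>
    Function.update_of_ne (ne_of_mem_of_not_mem hx hy) w f
  have hf' := hf.congr heq.symm
  refine ⟨(Set.injOn_insert hy).2 ⟨hf'.injOn, ?_⟩, ?_⟩
  · rwa [heq.image_eq, Function.update_self]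
  · rintro a (rfl | ha) b (rfl | hb) hab
    · exact absurd hab F.irrefl
    · rw [Function.update_self, heq hb]; exact hadj b hab
    · rw [Function.update_self, heq ha]; exact (hadj a hab.symm).symm
    · exact hf'.map_adj ha hb hab

theorem isContained_of_forall_card_commonNbhd [Fintype V] [DecidableEq V] [DecidableRel F.Adj]
    [Fintype W] [DecidableEq W] [DecidableRel G.Adj] {D : Finset V} (hf : IsCopyOn F G f D)
    (hnbr : ∀ a ∉ D, ∀ b, F.Adj a b → b ∈ D)
    (hrich : ∀ a ∉ D, Fintype.card V ≤ #(G.commonNbhd ((F.neighborFinset a).image f))) :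
    F ⊑ G := by
  suffices ∀ L : Finset V, Disjoint L D → ∃ g : V → W, Set.EqOn g f D ∧ IsCopyOn F G g ↑(L ∪ D) by
    obtain ⟨g, -, hg⟩ := this Dᶜ disjoint_compl_left
    rw [coe_union, coe_compl, Set.compl_union_self] at hg
    exact hg.isContained
  intro L
  induction L using Finset.induction_on with
  | empty => exact fun _ => ⟨f, Set.eqOn_refl f _, by simpa using hf⟩
  | insert y L hyL ih =>
    intro hdisj
    rw [disjoint_insert_left] at hdisj
    obtain ⟨g, hgf, hg⟩ := ih hdisj.2
    have hyLD : y ∉ L ∪ D := by simp [hyL, hdisj.1]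
    have hused : #((L ∪ D).image g) < #(G.commonNbhd ((F.neighborFinset y).image f)) :=
      card_image_le.trans_lt ((card_lt_univ_of_notMem hyLD).trans_le (hrich y hdisj.1))
    obtain ⟨w, hw, hwg⟩ := exists_mem_notMem_of_card_lt_card hused
    refine ⟨Function.update g y w, fun x hx => ?_, ?_⟩
    · rw [Function.update_of_ne (ne_of_mem_of_not_mem hx hdisj.1)]; exact hgf hx
    · rw [insert_union, coe_insert]
      refine hg.update_insert (by exact_mod_cast hyLD) (fun b hb => ?_) (by simpa using hwg)
        fun b hb => ?_
      · exact mem_coe.2 (mem_union_right _ (hnbr y hdisj.1 b hb))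
      · rw [hgf (hnbr y hdisj.1 b hb)]
        exact (mem_commonNbhd.1 hw (f b)
          (mem_image_of_mem f ((mem_neighborFinset F y b).2 hb))).symm

end IsCopyOn

theorem exists_isCopyOn_union [DecidableEq V] [Nonempty W] {X Y : Finset V} {U T : Finset W}
    (hX : ∀ a ∈ X, ∀ b ∈ X, ¬ F.Adj a b) (hY : ∀ a ∈ Y, ∀ b ∈ Y, ¬ F.Adj a b)
    (hUT : ∀ x ∈ U, ∀ y ∈ T, G.Adj x y) (hXU : #X ≤ #U) (hYT : #Y ≤ #T) :
    ∃ f : V → W, IsCopyOn F G f ↑(X ∪ Y) ∧ Set.MapsTo f X U := by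
  obtain ⟨fX, hfXU, hfX⟩ := X.finite_toSet.exists_injOn_of_encard_le (t := (U : Set W))
    (by simpa only [Set.encard_coe_eq_coe_finsetCard] using Nat.cast_le.2 hXU)
  obtain ⟨fY, hfYT, hfY⟩ := Y.finite_toSet.exists_injOn_of_encard_le (t := (T : Set W))
    (by simpa only [Set.encard_coe_eq_coe_finsetCard] using Nat.cast_le.2 hYT)
  have hne : ∀ a ∈ X, ∀ b ∈ Y, fX a ≠ fY b := fun a ha b hb h =>
    G.irrefl (hUT _ (hfXU ha) _ (h ▸ hfYT hb : fX a ∈ T))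
  refine ⟨fun a => if a ∈ X then fX a else fY a, ⟨?_, ?_⟩, fun a ha => by
    simpa [mem_coe.1 ha] using hfXU ha⟩
  · intro a ha b hb hab
    simp only [coe_union, Set.mem_union, mem_coe] at ha hb
    by_cases haX : a ∈ X <;> by_cases hbX : b ∈ X <;> simp only [haX, hbX, ↓reduceIte] at hab
    · exact hfX haX hbX hab
    · exact absurd hab (hne a haX b (hb.resolve_left hbX))
    · exact absurd hab.symm (hne b hbX a (ha.resolve_left haX))
    · exact hfY (ha.resolve_left haX) (hb.resolve_left hbX) hab
  · intro a ha b hb hab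
    simp only [coe_union, Set.mem_union, mem_coe] at ha hb
    by_cases haX : a ∈ X <;> by_cases hbX : b ∈ X <;> simp only [haX, hbX, ↓reduceIte]
    · exact absurd hab (hX a haX b hbX)
    · exact hUT _ (hfXU haX) _ (hfYT (hb.resolve_left hbX))
    · exact (hUT _ (hfXU hbX) _ (hfYT (ha.resolve_left haX))).symm
    · exact absurd hab (hY a (ha.resolve_left haX) b (hb.resolve_left hbX))

theorem isContained_of_joined_of_forall_card_commonNbhd [Fintype V] [DecidableRel F.Adj]
    [Fintype W] [DecidableEq W] [DecidableRel G.Adj] (φ : F.Coloring (Fin 2)) (d : ℕ)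
    {U T : Finset W} (hUT : ∀ x ∈ U, ∀ y ∈ T, G.Adj x y) (hU : Fintype.card V ≤ #U)
    (hT : #{v | d < F.degree v} ≤ #T)
    (hrich : ∀ S ⊆ U, #S ≤ d → Fintype.card V ≤ #(G.commonNbhd S)) : F ⊑ G := by
  classical
  rcases isEmpty_or_nonempty V with hV | ⟨⟨v⟩⟩
  · exact IsContained.of_isEmpty
  obtain ⟨x, -⟩ := card_pos.1 ((Fintype.card_pos_iff.2 ⟨v⟩).trans_le hU)
  have : Nonempty W := ⟨x⟩
  have hφ : ∀ a, φ a ≠ 0 → φ a = 1 := fun a => by omega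
  set X : Finset V := {a | φ a = 0}
  set Y : Finset V := {a | φ a = 1 ∧ d < F.degree a}
  obtain ⟨f, hf, hfX⟩ := exists_isCopyOn_union (X := X) (Y := Y) (hUT := hUT)
    (fun a ha b hb hab => φ.valid hab (by simp_all [X]))
    (fun a ha b hb hab => φ.valid hab (by simp_all [Y]))
    ((card_le_univ X).trans hU) ((card_le_card fun a ha => by simp_all [Y]).trans hT)
  have hlow : ∀ a ∉ X ∪ Y, ∀ b, F.Adj a b → b ∈ X := fun a ha b hab => by
    simp only [X, Y, mem_union, mem_filter, mem_univ, true_and, not_or] at ha ⊢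
    have := φ.valid hab
    rw [hφ a ha.1] at this
    omega
  refine hf.isContained_of_forall_card_commonNbhd
    (fun a ha b hab => mem_union_left _ (hlow a ha b hab)) fun a ha => hrich _ ?_ ?_
  · exact image_subset_iff.2 fun b hb => hfX (hlow a ha b ((mem_neighborFinset _ _ _).1 hb))
  · simp only [X, Y, mem_union, mem_filter, mem_univ, true_and, not_or, not_and, not_lt] at ha
    exact card_image_le.trans ((card_neighborFinset_eq_degree F a).trans_le (ha.2 (hφ a ha.1)))

theorem card_le_two_mul_card_edgeFinset [Fintype V] [DecidableRel F.Adj]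
    (hiso : ∀ v, ∃ w, F.Adj v w) : Fintype.card V ≤ 2 * #F.edgeFinset := by
  rw [← sum_degrees_eq_twice_card_edges, ← card_univ, card_eq_sum_ones]
  exact sum_le_sum fun v _ => (F.degree_pos_iff_exists_adj v).2 (hiso v)

theorem card_filter_lt_degree_mul_le [Fintype V] [DecidableRel F.Adj] (d : ℕ) :
    #{v | d < F.degree v} * (d + 1) ≤ 2 * #F.edgeFinset := by
  rw [← sum_degrees_eq_twice_card_edges, ← smul_eq_mul]
  exact (card_nsmul_le_sum _ _ _ fun v hv => (mem_filter.1 hv).2).trans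
    (sum_le_sum_of_subset (subset_univ _))

theorem card_mul_le_two_mul_sum_degree_or_compl [Fintype W] [DecidableEq W] (G : SimpleGraph W)
    [DecidableRel G.Adj] :
    Fintype.card W * (Fintype.card W - 1) ≤ 2 * ∑ v, G.degree v ∨
      Fintype.card W * (Fintype.card W - 1) ≤ 2 * ∑ v, Gᶜ.degree v := by
  have hsum : ∑ v, G.degree v + ∑ v, Gᶜ.degree v = Fintype.card W * (Fintype.card W - 1) := by
    rw [← sum_add_distrib]
    calc ∑ v, (G.degree v + Gᶜ.degree v) = ∑ _v : W, (Fintype.card W - 1) := by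
          refine sum_congr rfl fun v _ => ?_
          have := G.degree_lt_card_verts v
          rw [degree_compl]
          omega
      _ = Fintype.card W * (Fintype.card W - 1) := by simp
  omega

end SimpleGraph

/-- With `s = ⌊√m⌋`, the summands are the two conditions on the number of vertices in dependent
random choice with `d = s`, `t = 2s + 1` and `K = u = 2m`. -/
def ramseyBound (m : ℕ) : ℕ :=
  (2 * m) ^ 2 + 2 ^ (2 * m.sqrt + 1) * (2 * m + (2 * m.sqrt + 1) ^ 2 + 1) + 2 * m.sqrt + 2

theorem SimpleGraph.isContained_of_card_mul_le_two_mul_sum_degree {V W : Type*} [Fintype V]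
    {F : SimpleGraph V} [DecidableRel F.Adj] {m : ℕ} (hm : #F.edgeFinset ≤ m)
    (hbip : F.Colorable 2) (hiso : ∀ v, ∃ w, F.Adj v w) [Fintype W] [DecidableEq W]
    {G : SimpleGraph W} [DecidableRel G.Adj] (hW : ramseyBound m ≤ Fintype.card W)
    (hdeg : Fintype.card W * (Fintype.card W - 1) ≤ 2 * ∑ v, G.degree v) : F ⊑ G := by
  rcases isEmpty_or_nonempty V with hV | ⟨⟨v⟩⟩
  · exact IsContained.of_isEmpty
  obtain ⟨φ⟩ := hbip
  unfold ramseyBound at hW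
  set s := m.sqrt
  set N := Fintype.card W
  have hVm : Fintype.card V ≤ 2 * m := (card_le_two_mul_card_edgeFinset hiso).trans (by omega)
  have hm1 : 1 ≤ m := by have := Fintype.card_pos_iff.2 ⟨v⟩; omega
  have hs1 : 1 ≤ s := Nat.sqrt_pos.2 hm1
  have hsm : s ≤ m := Nat.sqrt_le_self m
  have hhigh : #{v | s < F.degree v} ≤ 2 * s + 1 := by
    have h₁ := card_filter_lt_degree_mul_le (F := F) s
    have h₂ := Nat.lt_succ_sqrt' m
    rw [Nat.succ_eq_add_one] at h₂
    have : #{v | s < F.degree v} < 2 * (s + 1) := by nlinarith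
    omega
  have hK : (2 * m) ^ 2 ≤ N := by omega
  have hsparse : N.choose s * (2 * m) ^ (2 * s + 1) ≤ N ^ (2 * s + 1) :=
    calc N.choose s * (2 * m) ^ (2 * s + 1) = N.choose s * (((2 * m) ^ 2) ^ s * (2 * m)) := by
          rw [← pow_mul, ← pow_succ]
      _ ≤ N ^ s * (N ^ s * N) := by
          gcongr
          · exact N.choose_le_pow s
          · nlinarith
      _ = N ^ (2 * s + 1) := by ring
  have hN : 2 ^ (2 * s + 1) * (2 * m + (2 * s + 1) ^ 2 + 1) + (2 * s + 1) < N := by omega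
  obtain ⟨U, T, hT, hUT, hU, hrich⟩ := dependent_random_choice s (2 * m) (2 * s + 1) (2 * m) hs1
    (by omega) hdeg hsparse hN
  exact isContained_of_joined_of_forall_card_commonNbhd φ s hUT (hVm.trans hU) (hT ▸ hhigh)
    fun S hS hSd => hVm.trans (hrich S hS hSd)

theorem monoCopyIn_of_isContained {V : Type*} {F : SimpleGraph V} {N k : ℕ}
    {C : Sym2 (Fin N) → Fin k} (c : Fin k)
    (h : F ⊑ SimpleGraph.fromRel fun u v => C s(u, v) = c) : monoCopyIn F C :=
  let ⟨f⟩ := h; ⟨c, f.toHom, f.injective⟩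

theorem fromRel_eq_one_eq_compl {N : ℕ} (C : Sym2 (Fin N) → Fin 2) :
    (SimpleGraph.fromRel fun u v => C s(u, v) = 1) =
      (SimpleGraph.fromRel fun u v => C s(u, v) = 0)ᶜ := by
  ext u v
  have hC : ∀ c : Fin 2, c = 1 ↔ c ≠ 0 := by decide
  simp only [fromRel_adj, compl_adj, Sym2.eq_swap (a := v), or_self, hC]
  tauto

theorem multiRamsey_two_le {V : Type*} {F : SimpleGraph V} {N : ℕ}
    (h : ∀ G : SimpleGraph (Fin N), F ⊑ G ∨ F ⊑ Gᶜ) : multiRamsey F 2 ≤ N :=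
  Nat.sInf_le fun C => (h _).elim (monoCopyIn_of_isContained 0)
    fun hc => monoCopyIn_of_isContained 1 (fromRel_eq_one_eq_compl C ▸ hc)

theorem multiRamsey_two_le_ramseyBound {V : Type*} [Fintype V] {F : SimpleGraph V} {m : ℕ}
    (hm : F.edgeSet.ncard ≤ m) (hbip : F.Colorable 2) (hiso : ∀ v, ∃ w, F.Adj v w) :
    multiRamsey F 2 ≤ ramseyBound m := by
  classical
  have hm' : #F.edgeFinset ≤ m := by rwa [← Set.ncard_coe_finset, coe_edgeFinset]
  have hW : ramseyBound m ≤ Fintype.card (Fin (ramseyBound m)) := (Fintype.card_fin _).ge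
  exact multiRamsey_two_le fun G => (card_mul_le_two_mul_sum_degree_or_compl G).imp
    (isContained_of_card_mul_le_two_mul_sum_degree hm' hbip hiso hW)
    (isContained_of_card_mul_le_two_mul_sum_degree hm' hbip hiso hW)

theorem ramseyBound_le {m : ℕ} (hm : 1 ≤ m) : ramseyBound m ≤ 32 * m * 4 ^ m.sqrt := by
  unfold ramseyBound
  set s := m.sqrt
  have hs1 : 1 ≤ s := Nat.sqrt_pos.2 hm
  have hs2 : s ^ 2 ≤ m := Nat.sqrt_le' m
  have hsm : s ≤ m := Nat.sqrt_le_self m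
  have hm4 : m ≤ 4 ^ s :=
    calc m ≤ (s + 1) ^ 2 := (Nat.lt_succ_sqrt' m).le
      _ ≤ (2 ^ s) ^ 2 := Nat.pow_le_pow_left Nat.lt_two_pow_self 2
      _ = 4 ^ s := by rw [← pow_mul, mul_comm, pow_mul]; norm_num
  have h2 : 2 ^ (2 * s + 1) = 2 * 4 ^ s := by rw [pow_succ, pow_mul]; norm_num; ring
  rw [h2]
  nlinarith

theorem four_pow_sqrt_le (m : ℕ) : (4 : ℝ) ^ m.sqrt ≤ 2 ^ (2 * √m) := by
  rw [show (4 : ℝ) = 2 ^ (2 : ℝ) by norm_num, ← Real.rpow_natCast, ← Real.rpow_mul (by norm_num)]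
  refine Real.rpow_le_rpow_of_exponent_le (by norm_num) (mul_le_mul_of_nonneg_left ?_ zero_le_two)
  exact Real.le_sqrt_of_sq_le (by exact_mod_cast Nat.sqrt_le' m)

theorem mul_four_pow_sqrt_le {m : ℕ} (hm : 1 ≤ m) :
    (32 * m * 4 ^ m.sqrt : ℝ) ≤
      2 ^ 6 * (m : ℝ) ^ ((3 : ℝ) / 2) * (2 : ℝ) ^ (2 * √(2 * m) + 1 / 2) := by
  have hm' : (1 : ℝ) ≤ m := by exact_mod_cast hm
  gcongr
  · norm_num
  · simpa using Real.rpow_le_rpow_of_exponent_le hm' (show (1 : ℝ) ≤ 3 / 2 by norm_num)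
  · refine (four_pow_sqrt_le m).trans (Real.rpow_le_rpow_of_exponent_le one_le_two ?_)
    have := Real.sqrt_le_sqrt (show (m : ℝ) ≤ 2 * m by linarith)
    linarith

theorem eventually_mul_four_pow_sqrt_le {ε : ℝ} (hε : 0 < ε) :
    ∀ᶠ m : ℕ in atTop, (32 * m * 4 ^ m.sqrt : ℝ) ≤ 2 ^ ((1 + ε) * (2 * √(2 * m))) := by
  have hb : 0 < Real.log 2 * (2 * ε) := by positivity
  have hx : ∀ᶠ x : ℝ in atTop, 32 * x ^ 2 ≤ 2 ^ (2 * ε * x) := by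
    filter_upwards [(isLittleO_pow_exp_pos_mul_atTop 2 hb).bound (c := 1 / 32) (by norm_num)]
      with x hx
    rw [Real.norm_eq_abs, Real.norm_eq_abs, abs_of_nonneg (sq_nonneg x),
      abs_of_pos (Real.exp_pos _)] at hx
    rw [Real.rpow_def_of_pos two_pos, ← mul_assoc]
    linarith
  filter_upwards [(Real.tendsto_sqrt_atTop.comp tendsto_natCast_atTop_atTop).eventually hx]
    with m hm
  calc (32 * m * 4 ^ m.sqrt : ℝ) ≤ 32 * √(m : ℝ) ^ 2 * 2 ^ (2 * √(m : ℝ)) := by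
        rw [Real.sq_sqrt (Nat.cast_nonneg m)]; gcongr; exact four_pow_sqrt_le m
    _ ≤ 2 ^ (2 * ε * √(m : ℝ)) * 2 ^ (2 * √(m : ℝ)) := by gcongr; exact hm
    _ = 2 ^ ((1 + ε) * (2 * √(m : ℝ))) := by rw [← Real.rpow_add two_pos]; ring_nf
    _ ≤ 2 ^ ((1 + ε) * (2 * √(2 * m))) := by
      gcongr <;> linarith [(Nat.cast_nonneg m : (0 : ℝ) ≤ m)]

/-- **Corollary.** Let `F` be a bipartite graph with `m` edges and no
isolated vertices. Then `r_2(F) ≤ 2^6 · m^{3/2} · 2^{2√(2m) + 1/2}`; in particular,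
`r_2(F) ≤ 2^{(1+o(1))·2√(2m)}` as `m → ∞`: for every `ε > 0` there is `M` such that every
bipartite graph `F` with `m ≥ M` edges and no isolated vertices has
`r_2(F) ≤ 2^{(1+ε)·2√(2m)}`. -/
theorem twoColorRamsey_le_bipartite {V : Type*} [Fintype V] (F : SimpleGraph V)
    (m : ℕ) (hm : F.edgeSet.ncard = m)
    (hbip : F.Colorable 2) (hiso : ∀ v : V, ∃ w, F.Adj v w) :
    (multiRamsey F 2 : ℝ) ≤
        2 ^ 6 * (m : ℝ) ^ ((3 : ℝ) / 2) * (2 : ℝ) ^ (2 * Real.sqrt (2 * m) + 1 / 2) ∧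
      ∀ ε : ℝ, 0 < ε → ∃ M : ℕ, ∀ m' : ℕ, M ≤ m' →
        ∀ (n : ℕ) (F' : SimpleGraph (Fin n)), F'.edgeSet.ncard = m' →
          F'.Colorable 2 → (∀ v, ∃ w, F'.Adj v w) →
          (multiRamsey F' 2 : ℝ) ≤ (2 : ℝ) ^ ((1 + ε) * (2 * Real.sqrt (2 * m'))) := by
  have hbound : ∀ {m : ℕ}, 1 ≤ m → (ramseyBound m : ℝ) ≤ 32 * m * 4 ^ m.sqrt := fun hm1 => by
    exact_mod_cast ramseyBound_le hm1
  refine ⟨?_, fun ε hε => ?_⟩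
  · rcases Nat.eq_zero_or_pos m with rfl | hm1
    · have : IsEmpty V := ⟨fun v => by
        obtain ⟨w, hw⟩ := hiso v
        simpa [(Set.ncard_eq_zero F.edgeSet.toFinite).1 hm] using F.mem_edgeSet.2 hw⟩
      have h0 := multiRamsey_two_le (F := F) (N := 0) fun _ => Or.inl .of_isEmpty
      rw [Nat.le_zero.1 h0, Nat.cast_zero]
      positivity
    · calc (multiRamsey F 2 : ℝ) ≤ ramseyBound m := by
            exact_mod_cast multiRamsey_two_le_ramseyBound hm.le hbip hiso
        _ ≤ _ := (hbound hm1).trans (mul_four_pow_sqrt_le hm1)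
  · obtain ⟨M, hM⟩ := eventually_atTop.1
      ((eventually_mul_four_pow_sqrt_le hε).and (eventually_ge_atTop 1))
    refine ⟨M, fun m' hm' n F' hF' hbip' hiso' => ?_⟩
    calc (multiRamsey F' 2 : ℝ) ≤ ramseyBound m' := by
          exact_mod_cast multiRamsey_two_le_ramseyBound hF'.le hbip' hiso'
      _ ≤ _ := (hbound (hM m' hm').2).trans (hM m' hm').1
end

section
/- (Dependent Random Choice) If ε > 0 and G = (V₁, V₂; E) is a bipartite graph with |V₁| = |V₂| = N and at least εN² edges, then for all positive integers a, d, t, x, there is a subset A ⊆ V₂ with |A| ≥ 2^{-1/a} ε^t N such that for all but at most 2 ε^{-ta} (x/N)^t (|A|/N)^a · C(N, d) of the d-element subsets S of A, the common neighborhood of S in V₁ has size at least x. -/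
/-!
Pick a tuple `u₁, …, u_t` of vertices of `V₁` uniformly at random and let `A` be its common
neighbourhood in `V₂`. Convexity, applied once to the degrees and once to `|A|`, gives
`𝔼 |A|^a ≥ (ε^t N)^a`. A `d`-set `S ⊆ V₂` with `|N(S)| < x` lies in `A` only if every `u_i` lies
in `N(S)`, so the expected number `Y` of such sets inside `A` is at most `C(N, d) (x/N)^t`.
Comparing averages, some tuple satisfies
`(ε^t N)^a (C(N, d) (x/N)^t + Y) ≤ 2 C(N, d) (x/N)^t |A|^a`, which gives both bounds. Expectations are written as sums over all `N^t` tuples.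
-/

open Finset

section PowerMean

variable {ι R : Type*} [CommSemiring R] [LinearOrder R] [IsStrictOrderedRing R]
  [ExistsAddOfLE R]

lemma card_mul_pow_le_sum_pow {s : Finset ι} {f : ι → R} {m : R} (hf : ∀ i ∈ s, 0 ≤ f i)
    (hm : 0 ≤ m) (h : #s * m ≤ ∑ i ∈ s, f i) : ∀ n : ℕ, #s * m ^ n ≤ ∑ i ∈ s, f i ^ n
  | 0 => by simp
  | n + 1 => by
    obtain rfl | hs := s.eq_empty_or_nonempty
    · simp
    refine le_of_mul_le_mul_left ?_ (pow_pos (Nat.cast_pos.2 hs.card_pos) n)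
    calc (#s : R) ^ n * (#s * m ^ (n + 1)) = (#s * m) ^ (n + 1) := by ring
      _ ≤ (∑ i ∈ s, f i) ^ (n + 1) := by gcongr
      _ ≤ #s ^ n * ∑ i ∈ s, f i ^ (n + 1) := pow_sum_le_card_mul_sum_pow hf n

end PowerMean

lemma exists_le_two_mul_and_mul_le_of_sum_le {ι K : Type*} [Field K] [LinearOrder K]
    [IsStrictOrderedRing K] {s : Finset ι} (hs : s.Nonempty) {P Y : ι → K} {M B : K}
    (hM : 0 < M) (hB : 0 ≤ B) (hY : ∀ i ∈ s, 0 ≤ Y i)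
    (hP : #s * M ≤ ∑ i ∈ s, P i) (hYB : ∑ i ∈ s, Y i ≤ #s * B) :
    ∃ i ∈ s, M ≤ 2 * P i ∧ M * Y i ≤ 2 * B * P i := by
  rcases hB.eq_or_lt with rfl | hB
  · have hY0 : ∀ i ∈ s, Y i = 0 :=
      (sum_eq_zero_iff_of_nonneg hY).1 (le_antisymm (by simpa using hYB) (sum_nonneg hY))
    obtain ⟨i, hi, hPi⟩ := exists_le_of_sum_le hs (f := fun _ ↦ M) (g := P) (by simpa using hP)
    exact ⟨i, hi, by linarith, by simp [hY0 i hi]⟩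
  · have hsum : ∑ i ∈ s, (B * M + M * Y i) ≤ ∑ i ∈ s, 2 * B * P i := by
      rw [sum_add_distrib, sum_const, nsmul_eq_mul, ← mul_sum, ← mul_sum]
      nlinarith
    obtain ⟨i, hi, hPi⟩ := exists_le_of_sum_le hs hsum
    have hMY : 0 ≤ M * Y i := mul_nonneg hM.le (hY i hi)
    exact ⟨i, hi, le_of_mul_le_mul_left (by linarith) hB, by nlinarith⟩

lemma rpow_neg_inv_mul_le_of_pow_le {c y z : ℝ} {n : ℕ} (hn : n ≠ 0) (hc : 0 < c) (hy : 0 ≤ y)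
    (h : z ^ n ≤ c * y ^ n) : c ^ (-(1 : ℝ) / n) * z ≤ y := by
  refine le_of_pow_le_pow_left₀ hn hy ?_
  have hcn : (c ^ (-(1 : ℝ) / n)) ^ n = c⁻¹ := by
    rw [← Real.rpow_natCast, ← Real.rpow_mul hc.le, div_mul_cancel₀ _ (by exact_mod_cast hn),
      Real.rpow_neg_one]
  rw [mul_pow, hcn, inv_mul_le_iff₀ hc]
  exact h

section CommonNeighbourhoods

variable {ι α β : Type*} [Fintype ι] [Fintype α] [Fintype β] (r : α → β → Prop) [DecidableRel r]

def commonNbhd (S : Finset β) : Finset α := {u | ∀ v ∈ S, r u v}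

def tupleNbhd (f : ι → α) : Finset β := {v | ∀ i, r (f i) v}

variable {r}

lemma subset_tupleNbhd_iff {S : Finset β} {f : ι → α} :
    S ⊆ tupleNbhd r f ↔ ∀ i, f i ∈ commonNbhd r S := by
  simp only [subset_iff, tupleNbhd, commonNbhd, mem_filter, mem_univ, true_and]
  exact ⟨fun h i v hv ↦ h hv i, fun h v hv i ↦ h i v hv⟩

variable (r)

lemma sum_card_commonNbhd_singleton :
    ∑ v, #(commonNbhd r {v}) = #{p : α × β | r p.1 p.2} := by
  rw [card_filter, ← univ_product_univ, sum_product_right]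
  simp [commonNbhd]

variable [DecidableEq ι] [DecidableEq β]

lemma card_filter_subset_tupleNbhd (S : Finset β) :
    #{f : ι → α | S ⊆ tupleNbhd r f} = #(commonNbhd r S) ^ Fintype.card ι := by
  have : ({f | S ⊆ tupleNbhd r f} : Finset (ι → α)) = Fintype.piFinset fun _ ↦ commonNbhd r S := by
    ext f
    simp [subset_tupleNbhd_iff]
  simp [this]

lemma sum_card_filter_subset_tupleNbhd (𝒮 : Finset (Finset β)) :
    ∑ f : ι → α, #{S ∈ 𝒮 | S ⊆ tupleNbhd r f} =
      ∑ S ∈ 𝒮, #(commonNbhd r S) ^ Fintype.card ι := by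
  simp_rw [← card_filter_subset_tupleNbhd]
  exact sum_card_bipartiteAbove_eq_sum_card_bipartiteBelow _

lemma sum_card_tupleNbhd :
    ∑ f : ι → α, #(tupleNbhd r f) = ∑ v, #(commonNbhd r {v}) ^ Fintype.card ι := by
  have h (v : β) : #(commonNbhd r {v}) ^ Fintype.card ι = #{f : ι → α | v ∈ tupleNbhd r f} := by
    simp [← card_filter_subset_tupleNbhd]
  simp_rw [h, card_filter]
  rw [sum_comm]
  simp

lemma card_mul_pow_le_sum_card_tupleNbhd_pow {ε : ℝ} (hε : 0 ≤ ε)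
    (hE : ε * Fintype.card α * Fintype.card β ≤ #{p : α × β | r p.1 p.2}) (n : ℕ) :
    Fintype.card (ι → α) * (ε ^ Fintype.card ι * Fintype.card β) ^ n ≤
      ∑ f : ι → α, (#(tupleNbhd r f) : ℝ) ^ n := by
  have hdeg := card_mul_pow_le_sum_pow (s := univ) (f := fun v : β ↦ (#(commonNbhd r {v}) : ℝ))
    (fun _ _ ↦ Nat.cast_nonneg _) (m := ε * Fintype.card α) (by positivity)
    (by simpa [← sum_card_commonNbhd_singleton, mul_comm] using hE) (Fintype.card ι)
  have hsum := congrArg (Nat.cast (R := ℝ)) (sum_card_tupleNbhd (ι := ι) r)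
  push_cast at hsum
  refine card_mul_pow_le_sum_pow (s := univ) (fun _ _ ↦ Nat.cast_nonneg _) (by positivity) ?_ n
  calc (#(univ : Finset (ι → α)) : ℝ) * (ε ^ Fintype.card ι * Fintype.card β) =
        Fintype.card β * (ε * Fintype.card α) ^ Fintype.card ι := by
        simp only [card_univ, Fintype.card_fun]
        push_cast
        ring
    _ ≤ _ := by simpa [hsum] using hdeg

def badSubsets (d x : ℕ) (A : Finset β) : Finset (Finset β) :=
  {S ∈ A.powersetCard d | #(commonNbhd r S) < x}

lemma sum_card_badSubsets_tupleNbhd_le (d x : ℕ) :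
    ∑ f : ι → α, #(badSubsets r d x (tupleNbhd r f)) ≤
      (Fintype.card β).choose d * x ^ Fintype.card ι := by
  set 𝒮 := badSubsets r d x univ
  have h𝒮 (f : ι → α) : badSubsets r d x (tupleNbhd r f) = {S ∈ 𝒮 | S ⊆ tupleNbhd r f} := by
    ext S
    simp only [𝒮, badSubsets, mem_filter, mem_powersetCard, subset_univ, true_and]
    tauto
  calc _ = ∑ S ∈ 𝒮, #(commonNbhd r S) ^ Fintype.card ι := by
        simp_rw [h𝒮]
        exact sum_card_filter_subset_tupleNbhd r 𝒮
    _ ≤ ∑ S ∈ 𝒮, x ^ Fintype.card ι :=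
        sum_le_sum fun S hS ↦ Nat.pow_le_pow_left (mem_filter.1 hS).2.le _
    _ ≤ (Fintype.card β).choose d * x ^ Fintype.card ι := by
        rw [sum_const, smul_eq_mul]
        refine Nat.mul_le_mul_right _ ?_
        exact (card_filter_le _ _).trans_eq (by simp)

lemma sum_card_badSubsets_tupleNbhd_le_card_mul [Nonempty α] (d x : ℕ) :
    ∑ f : ι → α, (#(badSubsets r d x (tupleNbhd r f)) : ℝ) ≤
      Fintype.card (ι → α) *
        ((Fintype.card β).choose d * ((x : ℝ) / Fintype.card α) ^ Fintype.card ι) := by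
  have hα : (Fintype.card α : ℝ) ≠ 0 := by positivity
  calc _ ≤ ((Fintype.card β).choose d * x ^ Fintype.card ι : ℝ) := by
        exact_mod_cast sum_card_badSubsets_tupleNbhd_le r d x
    _ = _ := by
        rw [Fintype.card_fun, Nat.cast_pow, div_pow]
        field_simp

end CommonNeighbourhoods

theorem dependent_random_choice_general (N : ℕ) (r : Fin N → Fin N → Prop)
    [DecidableRel r] (ε : ℝ) (hε : 0 < ε)
    (hE : ε * N ^ 2 ≤ ((Finset.univ.filter fun p : Fin N × Fin N => r p.1 p.2).card : ℝ))
    (a d t x : ℕ) (ha : 0 < a) (hd : 0 < d) :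
    ∃ A : Finset (Fin N),
      (2 : ℝ) ^ (-(1 : ℝ) / a) * ε ^ t * N ≤ (A.card : ℝ) ∧
      (((A.powersetCard d).filter fun S =>
          (Finset.univ.filter fun u : Fin N => ∀ v ∈ S, r u v).card < x).card : ℝ) ≤
        2 * ε ^ (-(t * a : ℤ)) * ((x : ℝ) / N) ^ t * ((A.card : ℝ) / N) ^ a
          * (N.choose d) := by
  rcases N.eq_zero_or_pos with rfl | hN
  · refine ⟨∅, by simp, ?_⟩
    simp [Nat.choose_eq_zero_of_lt hd,
      powersetCard_eq_empty.2 (show #(∅ : Finset (Fin 0)) < d from hd)]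
  have : Nonempty (Fin N) := ⟨⟨0, hN⟩⟩
  obtain ⟨f, -, hsize, hbad⟩ := exists_le_two_mul_and_mul_le_of_sum_le univ_nonempty
    (by positivity) (by positivity) (fun _ _ ↦ Nat.cast_nonneg _)
    (card_mul_pow_le_sum_card_tupleNbhd_pow (ι := Fin t) r hε.le
      (by simpa [sq, mul_assoc] using hE) a)
    (sum_card_badSubsets_tupleNbhd_le_card_mul (ι := Fin t) r d x)
  simp only [Fintype.card_fin] at hsize hbad
  refine ⟨tupleNbhd r f, ?_, ?_⟩
  · rw [mul_assoc]
    exact rpow_neg_inv_mul_le_of_pow_le ha.ne' two_pos (Nat.cast_nonneg _) hsize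
  -- The statement decides `∀ v ∈ S` through `Fin N` rather than through `S`, so the two
  -- filters agree only up to their `Decidable` instances.
  calc _ = (#(badSubsets r d x (tupleNbhd r f)) : ℝ) := by
        unfold badSubsets commonNbhd
        congr!
    _ ≤ 2 * (N.choose d * ((x : ℝ) / N) ^ t) * #(tupleNbhd r f) ^ a / (ε ^ t * N) ^ a :=
        (le_div_iff₀' (by positivity)).2 hbad
    _ = _ := by
        rw [zpow_neg, ← Nat.cast_mul, zpow_natCast, mul_pow, ← pow_mul, div_pow (#_ : ℝ)]
        field_simp

/-- **Dependent Random Choice.** Let `G = (V₁, V₂; E)` be a bipartite graph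
with both parts of size `N` (modeled by the relation `r`, where `r u v` means that
`u ∈ V₁` is joined to `v ∈ V₂`) having at least `ε N²` edges, `ε > 0`. Then for all
positive integers `a, d, t, x` there is a subset `A ⊆ V₂` with `|A| ≥ 2^{-1/a} ε^t N`
such that for all but at most `2 ε^{-ta} (x/N)^t (|A|/N)^a · C(N,d)` of the `d`-element
subsets `S` of `A`, the common neighborhood `N(S) ⊆ V₁` of `S` has size at least `x`. -/
theorem dependent_random_choice (N : ℕ) (r : Fin N → Fin N → Prop)
    [DecidableRel r] (ε : ℝ) (hε : 0 < ε)
    (hE : ε * N ^ 2 ≤ ((Finset.univ.filter fun p : Fin N × Fin N => r p.1 p.2).card : ℝ))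
    (a d t x : ℕ) (ha : 0 < a) (hd : 0 < d) (ht : 0 < t) (hx : 0 < x) :
    ∃ A : Finset (Fin N),
      (2 : ℝ) ^ (-(1 : ℝ) / a) * ε ^ t * N ≤ (A.card : ℝ) ∧
      (((A.powersetCard d).filter fun S =>
          (Finset.univ.filter fun u : Fin N => ∀ v ∈ S, r u v).card < x).card : ℝ) ≤
        2 * ε ^ (-(t * a : ℤ)) * ((x : ℝ) / N) ^ t * ((A.card : ℝ) / N) ^ a
          * (N.choose d) :=
  dependent_random_choice_general N r ε hε hE a d t x ha hd
end

section
/- Suppose G is a graph with vertex set V₁, and V₁ ⊇ V₂ ⊇ … ⊇ V_q is a nested family of subsets such that |V_q| ≥ x ≥ 4n, and for each 1 ≤ i < q, all but fewer than (2d)^{-d} · C(x, d) of the d-element subsets U ⊆ V_{i+1} satisfy |N(U) ∩ V_i| ≥ x. Then for every q-partite graph H with n vertices and maximum degree at most d, there are at least (x/4)^n labeled copies of H in G. -/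
/-!
Embed the vertices of `H` greedily in order of decreasing color, a vertex of color `j` into
`V_j`; its already embedded neighbors have larger colors, so their images lie in `V_{j+1}`.
Call a set `W ⊆ V_{j+1}` with `|W| = t` dangerous at level `j` if it lies in at least
`(2d)^{-(d-t)} C(x-t, d-t)` of the `d`-sets `U ⊆ V_{j+1}` with `|N(U) ∩ V_j| < x`. By hypothesis
`∅` is not dangerous; a set that is not dangerous has a good `d`-superset, hence at least `x`
common neighbors in `V_j`; and double counting shows that fewer than `x/(2d)` one-point
extensions of a non-dangerous set are dangerous. So if we keep the images of the embedded
neighborhood of every unembedded vertex non-dangerous, each new vertex has at least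
`x - n - d · x/(2d) ≥ x/4` admissible images.
-/

open Finset

namespace FoxSudakov

section Dangerous

variable {α : Type*} [DecidableEq α] {𝓑 : Finset (Finset α)} {x d : ℕ} {W : Finset α}

theorem two_mul_pow_sub_pos (d k : ℕ) : 0 < (2 * d) ^ (d - k) := by
  rcases Nat.eq_zero_or_pos d with rfl | hd
  · simp
  · positivity

def IsDangerous (𝓑 : Finset (Finset α)) (x d : ℕ) (W : Finset α) : Prop :=
  (x - #W).choose (d - #W) ≤ #{B ∈ 𝓑 | W ⊆ B} * (2 * d) ^ (d - #W)

instance (𝓑 : Finset (Finset α)) (x d : ℕ) : DecidablePred (IsDangerous 𝓑 x d) :=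
  fun _ => inferInstanceAs (Decidable (_ ≤ _))

theorem not_isDangerous_empty
    (h : (#𝓑 : ℝ) < (2 * d : ℝ) ^ (-(d : ℤ)) * x.choose d) : ¬ IsDangerous 𝓑 x d ∅ := by
  have hpos : (0 : ℝ) < (2 * d : ℝ) ^ d := by exact_mod_cast two_mul_pow_sub_pos d 0
  rw [zpow_neg, zpow_natCast, ← div_eq_inv_mul, lt_div_iff₀ hpos] at h
  simp only [IsDangerous, card_empty, Nat.sub_zero, empty_subset, filter_true, not_le]
  exact_mod_cast h

theorem choose_le_card_supersets {V : Finset α} (hWV : W ⊆ V) (hWd : #W ≤ d) :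
    (#V - #W).choose (d - #W) ≤ #{B ∈ V.powersetCard d | W ⊆ B} := by
  rw [← card_sdiff_of_subset hWV, ← card_powersetCard]
  refine card_le_card_of_injOn (· ∪ W) (fun U hU => ?_) (fun U hU U' hU' h => ?_)
  · rw [mem_coe, mem_powersetCard, subset_sdiff] at hU
    simp only [coe_filter, Set.mem_ofPred_eq, mem_powersetCard, subset_union_right, and_true]
    exact ⟨union_subset hU.1.1 hWV, by rw [card_union_of_disjoint hU.1.2, hU.2]; omega⟩
  · rw [mem_coe, mem_powersetCard, subset_sdiff] at hU hU'
    simpa [union_sdiff_right, sdiff_eq_self_of_disjoint hU.1.2,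
      sdiff_eq_self_of_disjoint hU'.1.2] using congr_arg (· \ W) h

theorem exists_superset_notMem_of_not_isDangerous {V : Finset α} (hxV : x ≤ #V) (hWV : W ⊆ V)
    (hWd : #W ≤ d) (hW : ¬ IsDangerous 𝓑 x d W) :
    ∃ B ∈ V.powersetCard d, W ⊆ B ∧ B ∉ 𝓑 := by
  by_contra! h
  have hsub : {B ∈ V.powersetCard d | W ⊆ B} ⊆ {B ∈ 𝓑 | W ⊆ B} := fun B hB => by
    rw [mem_filter] at hB ⊢
    exact ⟨h B hB.1 hB.2, hB.2⟩
  refine hW ((Nat.choose_le_choose _ (by omega : x - #W ≤ #V - #W)).trans ?_)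
  calc (#V - #W).choose (d - #W) ≤ #{B ∈ V.powersetCard d | W ⊆ B} :=
        choose_le_card_supersets hWV hWd
    _ ≤ #{B ∈ 𝓑 | W ⊆ B} := card_le_card hsub
    _ ≤ #{B ∈ 𝓑 | W ⊆ B} * (2 * d) ^ (d - #W) :=
        Nat.le_mul_of_pos_right _ (two_mul_pow_sub_pos d #W)

theorem sum_card_filter_insert_subset_le {D : Finset α} (h𝓑 : ∀ B ∈ 𝓑, #B = d)
    (hDW : Disjoint D W) :
    ∑ a ∈ D, #{B ∈ 𝓑 | insert a W ⊆ B} ≤ (d - #W) * #{B ∈ 𝓑 | W ⊆ B} := by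
  have hfilter : ∀ a, {B ∈ 𝓑 | insert a W ⊆ B} = {B ∈ {B ∈ 𝓑 | W ⊆ B} | a ∈ B} := fun a => by
    rw [filter_filter]
    simp only [insert_subset_iff, and_comm]
  simp_rw [hfilter]
  rw [mul_comm, ← smul_eq_mul]
  refine (sum_card_bipartiteAbove_eq_sum_card_bipartiteBelow (r := fun a B => a ∈ B)).trans_le
    (sum_le_card_nsmul _ _ _ fun B hB => ?_)
  rw [mem_filter] at hB
  calc #{a ∈ D | a ∈ B} ≤ #(B \ W) := card_le_card fun a ha => by
        rw [mem_filter] at ha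
        exact mem_sdiff.2 ⟨ha.2, disjoint_left.1 hDW ha.1⟩
    _ = d - #W := by rw [card_sdiff_of_subset hB.2, h𝓑 B hB.1]

theorem card_mul_lt_of_forall_isDangerous_insert {D : Finset α} (h𝓑 : ∀ B ∈ 𝓑, #B = d)
    (hWd : #W < d) (hW : ¬ IsDangerous 𝓑 x d W)
    (hD : ∀ a ∈ D, a ∉ W ∧ IsDangerous 𝓑 x d (insert a W)) : #D * (2 * d) < x := by
  have hdx : d - #W ≤ x - #W :=
    Nat.choose_ne_zero_iff.1 ((Nat.zero_le _).trans_lt (not_le.1 hW)).ne'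
  obtain ⟨r, hr⟩ : ∃ r, x - #W = r + 1 := Nat.exists_eq_add_one.2 (by omega)
  obtain ⟨s, hs⟩ : ∃ s, d - #W = s + 1 := Nat.exists_eq_add_one.2 (by omega)
  set P := #{B ∈ 𝓑 | W ⊆ B}
  have hins : ∀ a ∈ D, r.choose s ≤ #{B ∈ 𝓑 | insert a W ⊆ B} * (2 * d) ^ s := fun a ha => by
    have h := (hD a ha).2
    rwa [IsDangerous, card_insert_of_notMem (hD a ha).1, ← Nat.sub_sub, ← Nat.sub_sub, hr, hs,
      Nat.add_sub_cancel, Nat.add_sub_cancel] at h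
  have hsum : #D * r.choose s ≤ (s + 1) * P * (2 * d) ^ s := by
    rw [← hs, ← smul_eq_mul]
    calc #D • r.choose s ≤ ∑ a ∈ D, #{B ∈ 𝓑 | insert a W ⊆ B} * (2 * d) ^ s :=
          card_nsmul_le_sum _ _ _ hins
      _ = (∑ a ∈ D, #{B ∈ 𝓑 | insert a W ⊆ B}) * (2 * d) ^ s := (sum_mul ..).symm
      _ ≤ (d - #W) * P * (2 * d) ^ s := Nat.mul_le_mul_right _
          (sum_card_filter_insert_subset_le h𝓑 (disjoint_left.2 fun a ha => (hD a ha).1))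
  have hW' : P * (2 * d) ^ (s + 1) < (r + 1).choose (s + 1) := by
    simpa only [IsDangerous, not_le, hr, hs] using hW
  have key : #D * (2 * d) * r.choose s < (r + 1) * r.choose s := by
    calc #D * (2 * d) * r.choose s = #D * r.choose s * (2 * d) := by ring
      _ ≤ (s + 1) * P * (2 * d) ^ s * (2 * d) := Nat.mul_le_mul_right _ hsum
      _ = (s + 1) * (P * (2 * d) ^ (s + 1)) := by ring
      _ < (s + 1) * (r + 1).choose (s + 1) := Nat.mul_lt_mul_of_pos_left hW' s.succ_pos
      _ = (r + 1) * r.choose s := by rw [Nat.add_one_mul_choose_eq, mul_comm]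
  have := Nat.lt_of_mul_lt_mul_right key
  omega

end Dangerous

section Graph

variable {α : Type*} (G : SimpleGraph α) [DecidableRel G.Adj]

def commonNeighborsIn (V U : Finset α) : Finset α := {w ∈ V | ∀ u ∈ U, G.Adj u w}

def sparseSets (V V' : Finset α) (x d : ℕ) : Finset (Finset α) :=
  {U ∈ V.powersetCard d | #(commonNeighborsIn G V' U) < x}

variable {G} {V V' W : Finset α} {x d : ℕ}

theorem commonNeighborsIn_anti {U U' : Finset α} (h : U ⊆ U') :
    commonNeighborsIn G V U' ⊆ commonNeighborsIn G V U :=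
  monotone_filter_right _ fun _ _ hw u hu => hw u (h hu)

@[simp]
theorem commonNeighborsIn_empty : commonNeighborsIn G V ∅ = V :=
  filter_true_of_mem fun _ _ u hu => absurd hu (notMem_empty u)

theorem card_eq_of_mem_sparseSets {U : Finset α} (hU : U ∈ sparseSets G V V' x d) : #U = d :=
  (mem_powersetCard.1 (mem_filter.1 hU).1).2

theorem le_card_commonNeighborsIn_of_not_isDangerous [DecidableEq α] (hxV : x ≤ #V)
    (hWV : W ⊆ V) (hWd : #W ≤ d) (hW : ¬ IsDangerous (sparseSets G V V' x d) x d W) :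
    x ≤ #(commonNeighborsIn G V' W) := by
  obtain ⟨B, hB, hWB, hBgood⟩ := exists_superset_notMem_of_not_isDangerous hxV hWV hWd hW
  simp only [sparseSets, mem_filter, hB, true_and, not_lt] at hBgood
  exact hBgood.trans (card_le_card (commonNeighborsIn_anti hWB))

end Graph

section Embedding

variable {α β : Type*} [DecidableEq α] {G : SimpleGraph α} [DecidableRel G.Adj]
  {H : SimpleGraph β} [DecidableRel H.Adj] {q' : ℕ} {Vs : Fin (q' + 1) → Finset α}
  {c : β → Fin (q' + 1)} {x d : ℕ} {S : Finset β} {f : β → α} {a : α} {b k : β}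

variable (G Vs x d) in
def IsDangerousAt (j : Fin (q' + 1)) (W : Finset α) : Prop :=
  ∃ i : Fin q', i.castSucc = j ∧ IsDangerous (sparseSets G (Vs i.succ) (Vs i.castSucc) x d) x d W

instance (j : Fin (q' + 1)) : DecidablePred (IsDangerousAt G Vs x d j) :=
  fun _ => inferInstanceAs (Decidable (∃ _, _))

theorem isDangerousAt_castSucc_iff {i : Fin q'} {W : Finset α} :
    IsDangerousAt G Vs x d i.castSucc W ↔
      IsDangerous (sparseSets G (Vs i.succ) (Vs i.castSucc) x d) x d W :=
  ⟨fun ⟨_, hi, h⟩ => Fin.castSucc_injective _ hi ▸ h, fun h => ⟨i, rfl, h⟩⟩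

variable (H) in
def nbrImage (S : Finset β) (f : β → α) (k : β) : Finset α := {s ∈ S | H.Adj k s}.image f

theorem nbrImage_subset_image : nbrImage H S f k ⊆ S.image f :=
  image_subset_image (filter_subset _ _)

theorem card_nbrImage_le [Fintype β] (hdeg : H.degree k ≤ d) : #(nbrImage H S f k) ≤ d := by
  refine card_image_le.trans ((card_le_card fun s hs => ?_).trans hdeg)
  exact (H.mem_neighborFinset k s).2 (mem_filter.1 hs).2

theorem card_nbrImage_lt [Fintype β] (hdeg : H.degree k ≤ d) (hb : b ∉ S) (hkb : H.Adj k b) :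
    #(nbrImage H S f k) < d := by
  refine card_image_le.trans_lt ((card_lt_card ⟨fun s hs => ?_, fun h => ?_⟩).trans_le hdeg)
  · exact (H.mem_neighborFinset k s).2 (mem_filter.1 hs).2
  · exact hb (mem_filter.1 (h ((H.mem_neighborFinset k b).2 hkb))).1

theorem nbrImage_insert_update [DecidableEq β] (hb : b ∉ S) :
    nbrImage H (insert b S) (Function.update f b a) k =
      if H.Adj k b then insert a (nbrImage H S f k) else nbrImage H S f k := by
  have hS : image (Function.update f b a) {s ∈ S | H.Adj k s} = nbrImage H S f k :=
    image_congr fun s hs =>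
      Function.update_of_ne (by rintro rfl; exact hb (mem_filter.1 hs).1) _ _
  rw [nbrImage, filter_insert]
  split_ifs
  · rw [image_insert, Function.update_self, hS]
  · exact hS

variable (G H Vs c x d) in
structure IsGoodPartialEmbedding (S : Finset β) (f : β → α) : Prop where
  color_le : ∀ s ∈ S, ∀ t ∉ S, c t ≤ c s
  injOn : Set.InjOn f S
  mem_level : ∀ s ∈ S, f s ∈ Vs (c s)
  map_adj : ∀ s ∈ S, ∀ t ∈ S, H.Adj s t → G.Adj (f s) (f t)
  not_isDangerousAt : ∀ k ∉ S, ¬ IsDangerousAt G Vs x d (c k) (nbrImage H S f k)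

variable (G H) in
def extensions [Fintype α] [Fintype β] [DecidableEq β] (S : Finset β) (f : β → α) :
    Finset (β → α) :=
  {g | Function.Injective g ∧ (∀ u v, H.Adj u v → G.Adj (g u) (g v)) ∧ ∀ s ∈ S, g s = f s}

section Extensions

variable [Fintype α] [Fintype β] [DecidableEq β]

theorem coe_extensions_empty :
    (extensions G H ∅ f : Set (β → α)) =
      {g | Function.Injective g ∧ ∀ u v, H.Adj u v → G.Adj (g u) (g v)} := by
  ext g
  simp [extensions]

theorem sum_card_extensions_insert_update_le (hb : b ∉ S) (A : Finset α) :
    ∑ a ∈ A, #(extensions G H (insert b S) (Function.update f b a)) ≤ #(extensions G H S f) := by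
  rw [← card_biUnion]
  · refine card_le_card (biUnion_subset.2 fun a _ g hg => ?_)
    simp only [extensions, mem_filter, mem_univ, true_and, forall_mem_insert,
      Function.update_self] at hg ⊢
    refine ⟨hg.1, hg.2.1, fun s hs => (hg.2.2.2 s hs).trans ?_⟩
    exact Function.update_of_ne (by rintro rfl; exact hb hs) _ _
  · intro a₁ _ a₂ _ hne
    refine disjoint_left.2 fun g h₁ h₂ => hne ?_
    simp only [extensions, mem_filter, mem_univ, true_and, forall_mem_insert,
      Function.update_self] at h₁ h₂
    exact h₁.2.2.1.symm.trans h₂.2.2.1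

end Extensions

namespace IsGoodPartialEmbedding

theorem mem_extensions_univ [Fintype α] [Fintype β] [DecidableEq β]
    (hf : IsGoodPartialEmbedding G H Vs c x d univ f) : f ∈ extensions G H univ f := by
  simp only [extensions, mem_filter, mem_univ, true_and, implies_true, and_true]
  exact ⟨fun u v h => hf.injOn (by simp) (by simp) h,
    fun u v h => hf.map_adj u (mem_univ u) v (mem_univ v) h⟩

variable (hf : IsGoodPartialEmbedding G H Vs c x d S f)
include hf

theorem color_lt (hc : ∀ u v, H.Adj u v → c u ≠ c v) {s : β} (hk : k ∉ S) (hs : s ∈ S)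
    (hks : H.Adj k s) : c k < c s :=
  lt_of_le_of_ne (hf.color_le s hs k hk) (hc k s hks)

theorem nbrImage_subset (hc : ∀ u v, H.Adj u v → c u ≠ c v) (hVs : Antitone Vs) {i : Fin q'}
    (hk : k ∉ S) (hi : i.castSucc = c k) : nbrImage H S f k ⊆ Vs i.succ := by
  intro w hw
  obtain ⟨s, hs, rfl⟩ := mem_image.1 hw
  rw [mem_filter] at hs
  refine hVs ?_ (hf.mem_level s hs.1)
  rw [← Fin.castSucc_lt_iff_succ_le, hi]
  exact hf.color_lt hc hk hs.1 hs.2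

theorem le_card_commonNeighborsIn [Fintype β] (hc : ∀ u v, H.Adj u v → c u ≠ c v)
    (hVs : Antitone Vs) (hlast : x ≤ #(Vs (Fin.last q'))) (hdeg : ∀ v, H.degree v ≤ d)
    (hb : b ∉ S) : x ≤ #(commonNeighborsIn G (Vs (c b)) (nbrImage H S f b)) := by
  rcases Fin.eq_castSucc_or_eq_last (c b) with ⟨i, hi⟩ | hlast_eq
  · have hsafe := hf.not_isDangerousAt b hb
    rw [hi, isDangerousAt_castSucc_iff] at hsafe
    rw [hi]
    exact le_card_commonNeighborsIn_of_not_isDangerous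
      (hlast.trans (card_le_card (hVs (Fin.le_last _))))
      (hf.nbrImage_subset hc hVs hb hi.symm) (card_nbrImage_le (hdeg b)) hsafe
  · have hempty : nbrImage H S f b = ∅ := by
      refine image_eq_empty.2 (filter_eq_empty_iff.2 fun s hs hbs => ?_)
      exact (hf.color_lt hc hb hs hbs).not_ge (hlast_eq ▸ Fin.le_last _)
    rwa [hempty, commonNeighborsIn_empty, hlast_eq]

theorem card_filter_isDangerousAt_insert_mul_lt [Fintype β] (hdeg : ∀ v, H.degree v ≤ d)
    (hb : b ∉ S) (hk : k ∉ S) (hkb : H.Adj k b) (hck : c k ≠ Fin.last q') {E : Finset α}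
    (hE : Disjoint E (S.image f)) :
    #{a ∈ E | IsDangerousAt G Vs x d (c k) (insert a (nbrImage H S f k))} * (2 * d) < x := by
  obtain ⟨i, hi⟩ := Fin.exists_castSucc_eq.2 hck
  have hsafe := hf.not_isDangerousAt k hk
  rw [← hi] at hsafe ⊢
  simp_rw [isDangerousAt_castSucc_iff] at hsafe ⊢
  refine card_mul_lt_of_forall_isDangerous_insert (fun _ => card_eq_of_mem_sparseSets)
    (card_nbrImage_lt (hdeg k) hb hkb) hsafe fun a ha => ?_
  rw [mem_filter] at ha
  exact ⟨fun h => disjoint_left.1 hE ha.1 (nbrImage_subset_image h), ha.2⟩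

theorem insert_update [DecidableEq β] (hb : b ∉ S) (hbmax : ∀ t ∉ S, c t ≤ c b)
    (ha : a ∈ commonNeighborsIn G (Vs (c b)) (nbrImage H S f b)) (haS : a ∉ S.image f)
    (hsafe : ∀ k ∉ S, H.Adj b k → ¬ IsDangerousAt G Vs x d (c k) (insert a (nbrImage H S f k))) :
    IsGoodPartialEmbedding G H Vs c x d (insert b S) (Function.update f b a) := by
  have hupd : Set.EqOn (Function.update f b a) f S := fun s hs =>
    Function.update_of_ne (by rintro rfl; exact hb hs) _ _
  have hadj : ∀ s ∈ S, H.Adj b s → G.Adj (f s) a := fun s hs hbs =>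
    (mem_filter.1 ha).2 _ (mem_image_of_mem f (mem_filter.2 ⟨hs, hbs⟩))
  refine ⟨fun s hs t ht => ?_, ?_, fun s hs => ?_, fun s hs t ht hst => ?_, fun k hk => ?_⟩
  · rw [mem_insert, not_or] at ht
    rcases mem_insert.1 hs with rfl | hs
    · exact hbmax t ht.2
    · exact hf.color_le s hs t ht.2
  · rw [coe_insert, Set.injOn_insert (mod_cast hb), Function.update_self, hupd.image_eq]
    exact ⟨hupd.injOn_iff.2 hf.injOn, by simpa using haS⟩
  · rcases mem_insert.1 hs with rfl | hs
    · rw [Function.update_self]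
      exact (mem_filter.1 ha).1
    · rw [hupd hs]
      exact hf.mem_level s hs
  · rcases mem_insert.1 hs with rfl | hsS <;> rcases mem_insert.1 ht with rfl | htS
    · exact (H.irrefl hst).elim
    · rw [Function.update_self, hupd htS]
      exact (hadj t htS hst).symm
    · rw [Function.update_self, hupd hsS]
      exact hadj s hsS hst.symm
    · rw [hupd hsS, hupd htS]
      exact hf.map_adj s hsS t htS hst
  · rw [mem_insert, not_or] at hk
    rw [nbrImage_insert_update hb]
    split_ifs with hkb
    · exact hsafe k hk.2 hkb.symm
    · exact hf.not_isDangerousAt k hk.2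

theorem two_mul_card_filter_exists_isDangerousAt_le [Fintype β] [DecidableEq β]
    (hc : ∀ u v, H.Adj u v → c u ≠ c v) (hdeg : ∀ v, H.degree v ≤ d) (hb : b ∉ S)
    (hbmax : ∀ t ∉ S, c t ≤ c b) {E : Finset α} (hE : Disjoint E (S.image f)) :
    2 * #{a ∈ E | ∃ k ∉ S, H.Adj b k ∧
      IsDangerousAt G Vs x d (c k) (insert a (nbrImage H S f k))} ≤ x - 1 := by
  set K := H.neighborFinset b \ S
  set danger := fun k => {a ∈ E | IsDangerousAt G Vs x d (c k) (insert a (nbrImage H S f k))}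
  have hK : #K ≤ d := (card_le_card sdiff_subset).trans (hdeg b)
  have hsub : {a ∈ E | ∃ k ∉ S, H.Adj b k ∧
      IsDangerousAt G Vs x d (c k) (insert a (nbrImage H S f k))} ⊆ K.biUnion danger :=
    fun a ha => by
      obtain ⟨haE, k, hk, hbk, hdanger⟩ := mem_filter.1 ha
      exact mem_biUnion.2 ⟨k, mem_sdiff.2 ⟨(H.mem_neighborFinset b k).2 hbk, hk⟩,
        mem_filter.2 ⟨haE, hdanger⟩⟩
  have hdanger : ∀ k ∈ K, #(danger k) * (2 * d) ≤ x - 1 := fun k hk => by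
    obtain ⟨hbk, hk⟩ := mem_sdiff.1 hk
    rw [H.mem_neighborFinset] at hbk
    have hck : c k < c b := lt_of_le_of_ne (hbmax k hk) (hc k b hbk.symm)
    exact Nat.le_sub_one_of_lt (hf.card_filter_isDangerousAt_insert_mul_lt hdeg hb hk hbk.symm
      (Fin.ne_last_of_lt hck) hE)
  rcases Nat.eq_zero_or_pos d with rfl | hd
  · rw [card_eq_zero.1 (Nat.le_zero.1 hK), biUnion_empty, subset_empty] at hsub
    simp [hsub]
  refine Nat.le_of_mul_le_mul_right ?_ hd
  calc 2 * #_ * d = #_ * (2 * d) := by ring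
    _ ≤ #(K.biUnion danger) * (2 * d) := Nat.mul_le_mul_right _ (card_le_card hsub)
    _ ≤ (∑ k ∈ K, #(danger k)) * (2 * d) := Nat.mul_le_mul_right _ card_biUnion_le
    _ ≤ #K * (x - 1) := by
        rw [sum_mul, ← smul_eq_mul]
        exact sum_le_card_nsmul _ _ _ hdanger
    _ ≤ (x - 1) * d := by rw [mul_comm]; exact Nat.mul_le_mul_left _ hK

theorem exists_many_good_images [Fintype β] [DecidableEq β]
    (hc : ∀ u v, H.Adj u v → c u ≠ c v) (hVs : Antitone Vs) (hlast : x ≤ #(Vs (Fin.last q')))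
    (hdeg : ∀ v, H.degree v ≤ d) (hb : b ∉ S) (hbmax : ∀ t ∉ S, c t ≤ c b)
    (hx : 4 * (#S + 1) ≤ x) :
    ∃ A : Finset α, x ≤ 4 * #A ∧
      ∀ a ∈ A, IsGoodPartialEmbedding G H Vs c x d (insert b S) (Function.update f b a) := by
  set E := commonNeighborsIn G (Vs (c b)) (nbrImage H S f b) \ S.image f
  set IsUnsafe := fun a => ∃ k ∉ S, H.Adj b k ∧
    IsDangerousAt G Vs x d (c k) (insert a (nbrImage H S f k))
  refine ⟨{a ∈ E | ¬ IsUnsafe a}, ?_, fun a ha => ?_⟩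
  · have hE : x - #S ≤ #E :=
      (tsub_le_tsub (hf.le_card_commonNeighborsIn hc hVs hlast hdeg hb) card_image_le).trans
        (le_card_sdiff _ _)
    have hunsafe : 2 * #{a ∈ E | IsUnsafe a} ≤ x - 1 :=
      hf.two_mul_card_filter_exists_isDangerousAt_le hc hdeg hb hbmax sdiff_disjoint
    have hsplit : #{a ∈ E | IsUnsafe a} + #{a ∈ E | ¬ IsUnsafe a} = #E :=
      card_filter_add_card_filter_not _
    omega
  · obtain ⟨haE, hsafe⟩ := mem_filter.1 ha
    obtain ⟨ha, haS⟩ := mem_sdiff.1 haE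
    exact hf.insert_update hb hbmax ha haS fun k hk hbk h => hsafe ⟨k, hk, hbk, h⟩

theorem pow_card_compl_le [Fintype α] [Fintype β] [DecidableEq β]
    (hc : ∀ u v, H.Adj u v → c u ≠ c v) (hVs : Antitone Vs) (hlast : x ≤ #(Vs (Fin.last q')))
    (hdeg : ∀ v, H.degree v ≤ d) (hx : 4 * Fintype.card β ≤ x) :
    x ^ #Sᶜ ≤ 4 ^ #Sᶜ * #(extensions G H S f) := by
  induction hm : #Sᶜ generalizing S f with
  | zero =>
    obtain rfl : S = univ := (compl_eq_empty_iff S).1 (card_eq_zero.1 hm)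
    simpa using card_pos.2 ⟨f, hf.mem_extensions_univ⟩
  | succ m ih =>
    obtain ⟨b, hb, hbmax⟩ := exists_max_image Sᶜ c (card_pos.1 (by omega))
    rw [mem_compl] at hb
    have hS : #S + 1 ≤ Fintype.card β := by
      have := card_add_card_compl S
      omega
    obtain ⟨A, hA, hAgood⟩ := hf.exists_many_good_images hc hVs hlast hdeg hb
      (fun t ht => hbmax t (mem_compl.2 ht)) (by omega)
    have hm' : #(insert b S)ᶜ = m := by
      rw [compl_insert, card_erase_of_mem (mem_compl.2 hb), hm, Nat.add_sub_cancel]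
    calc x ^ (m + 1) = x * x ^ m := pow_succ' x m
      _ ≤ 4 * (#A • x ^ m) := by rw [smul_eq_mul, ← mul_assoc]; gcongr
      _ ≤ 4 * ∑ a ∈ A, 4 ^ m * #(extensions G H (insert b S) (Function.update f b a)) := by
          gcongr
          exact card_nsmul_le_sum _ _ _ fun a ha => ih (hAgood a ha) hm'
      _ ≤ 4 ^ (m + 1) * #(extensions G H S f) := by
          rw [← mul_sum, ← mul_assoc, ← pow_succ']
          exact Nat.mul_le_mul_left _ (sum_card_extensions_insert_update_le hb A)

end IsGoodPartialEmbedding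

end Embedding

end FoxSudakov

theorem embedding_lemma_nested_sets_general {α β : Type*} [Fintype α] [Fintype β] [DecidableEq α]
    (G : SimpleGraph α) [DecidableRel G.Adj] (q' : ℕ) (Vs : Fin (q' + 1) → Finset α)
    (hnested : ∀ i j : Fin (q' + 1), i ≤ j → Vs j ⊆ Vs i)
    (x n d : ℕ) (hxn : 4 * n ≤ x) (hlast : x ≤ (Vs (Fin.last q')).card)
    (hsets : ∀ i : Fin q',
      ((((Vs i.succ).powersetCard d).filter fun U =>
          ((Vs i.castSucc).filter fun w => ∀ u ∈ U, G.Adj u w).card < x).card : ℝ) <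
        (2 * (d : ℝ)) ^ (-(d : ℤ)) * (x.choose d))
    (H : SimpleGraph β) (hn : Fintype.card β = n)
    (hdeg : ∀ v : β, (H.neighborSet v).ncard ≤ d)
    (c : β → Fin (q' + 1)) (hc : ∀ a b : β, H.Adj a b → c a ≠ c b) :
    ((x : ℝ) / 4) ^ n ≤
      ({f : β → α | Function.Injective f ∧
          ∀ a b : β, H.Adj a b → G.Adj (f a) (f b)}.ncard : ℝ) := by
  have hempty (j : Fin (q' + 1)) : ¬ FoxSudakov.IsDangerousAt G Vs x d j ∅ := by
    rintro ⟨i, -, hi⟩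
    refine FoxSudakov.not_isDangerous_empty ?_ hi
    -- `hsets` decides `∀ u ∈ U, _` through `Fintype α`, so it matches only up to instances
    unfold FoxSudakov.sparseSets FoxSudakov.commonNeighborsIn
    convert hsets i
  classical
  have hdeg' : ∀ v, H.degree v ≤ d := fun v => by
    rw [← SimpleGraph.card_neighborSet_eq_degree, ← Nat.card_eq_fintype_card,
      Nat.card_coe_set_eq]
    exact hdeg v
  obtain ⟨f₀⟩ : Nonempty (β ↪ α) := Function.Embedding.nonempty_of_card_le <|
    calc Fintype.card β ≤ #(Vs (Fin.last q')) := by omega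
      _ ≤ Fintype.card α := card_le_univ _
  have hf₀ : FoxSudakov.IsGoodPartialEmbedding G H Vs c x d ∅ f₀ :=
    ⟨by simp, by simp, by simp, by simp, fun k _ => by
      simpa only [FoxSudakov.nbrImage, filter_empty, image_empty] using hempty (c k)⟩
  have key := hf₀.pow_card_compl_le hc hnested hlast hdeg' (hn ▸ hxn)
  rw [compl_empty, card_univ, hn] at key
  rw [← FoxSudakov.coe_extensions_empty (f := f₀), Set.ncard_coe_finset, div_pow,
    div_le_iff₀ (by positivity), mul_comm]
  exact_mod_cast key

/-- **Lemma 4.2 of Fox–Sudakov.** Suppose `G` is a graph with vertex set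
`V₁`, and `V₁ ⊇ V₂ ⊇ … ⊇ V_q` is a nested family of subsets (here `Vs i` is `V_{i+1}`,
`Vs 0 = V₁` is the whole vertex set, and there are `q ≥ 1`, i.e. `q' + 1`, sets) with
`|V_q| ≥ x ≥ 4n` such that for each `1 ≤ i < q`, all but fewer than `(2d)^{-d} C(x,d)`
of the `d`-element subsets `U ⊆ V_{i+1}` satisfy `|N(U) ∩ V_i| ≥ x`, where `N(U)` is the
common neighborhood of `U` in `G`. Then for every `q`-partite graph `H` with `n` vertices
and maximum degree at most `d`, there are at least `(x/4)^n` labeled copies of `H` in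
`G`. -/
theorem embedding_lemma_nested_sets {α β : Type*} [Fintype α] [Fintype β] [DecidableEq α]
    (G : SimpleGraph α) [DecidableRel G.Adj] (q' : ℕ) (Vs : Fin (q' + 1) → Finset α)
    (hV1 : Vs 0 = Finset.univ) (hnested : ∀ i j : Fin (q' + 1), i ≤ j → Vs j ⊆ Vs i)
    (x n d : ℕ) (hxn : 4 * n ≤ x) (hlast : x ≤ (Vs (Fin.last q')).card)
    (hsets : ∀ i : Fin q',
      ((((Vs i.succ).powersetCard d).filter fun U =>
          ((Vs i.castSucc).filter fun w => ∀ u ∈ U, G.Adj u w).card < x).card : ℝ) <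
        (2 * (d : ℝ)) ^ (-(d : ℤ)) * (x.choose d))
    (H : SimpleGraph β) (hn : Fintype.card β = n)
    (hdeg : ∀ v : β, (H.neighborSet v).ncard ≤ d)
    (c : β → Fin (q' + 1)) (hc : ∀ a b : β, H.Adj a b → c a ≠ c b) :
    ((x : ℝ) / 4) ^ n ≤
      ({f : β → α | Function.Injective f ∧
          ∀ a b : β, H.Adj a b → G.Adj (f a) (f b)}.ncard : ℝ) :=
  embedding_lemma_nested_sets_general G q' Vs hnested x n d hxn hlast hsets H hn hdeg c hc
end
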